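/- A series F ∈ 1 + x·ℤ((q^{1/2}))[[x]] is admissible if and only if F = exp(-∑_{n,m≥1} f_n(q^{m/2})/(m(1-q^m)) · x^{nm}) for some Laurent polynomials f_n ∈ ℤ[t^{±1}]. -/

import Mathlib

/-
Every factor of the admissible product is an exponential. The series `(a x; q)_∞` and
`exp L` with `L = -∑_{m ≥ 1} a^m x^m / (m (1 - q^m))` both solve `f(x) = (1 - a x) f(q x)`,
`f(0) = 1`: for `exp L` this follows from `L(x) = log (1 - a x) + L(q x)`, and the solution is
unique because `q` is not a root of unity. The exponential `E(L)` is handled through the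
differential equation `E' = L' E`, which makes it additive-to-multiplicative and compatible with
`x ↦ q x` and `x ↦ x^n`. Hence the product over `n ≤ k` is the exponential of a series agreeing
with `-∑_{n,m} f_n(q^{m/2}) x^{nm} / (m (1 - q^m))` up to degree `k`, which is all that the
`k`-th coefficient sees.
-/

/- STATEMENT 15: F ∈ 1 + x·ℤ((q^{1/2}))[[x]] is admissible iff
   F = exp(-∑_{n,m≥1} f_n(q^{m/2})/(m(1-q^m)) x^{nm}) for Laurent polynomials f_n ∈ ℤ[t^{±1}].
   Conventions: K = ℚ((s)), s = q^{1/2}; f_n is recorded by its finitely supported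
   coefficient function ℤ →₀ ℤ, so f_n(q^{m/2}) = ∑_i f_n(i)·s^{mi}; the exponential is
   computed degreewise by its (truncated) Taylor series. -/

namespace Stmt15

noncomputable section

abbrev K := LaurentSeries ℚ

def sp (m : ℤ) : K := HahnSeries.single m 1

def qq : K := sp 2

def qfac (j : ℕ) : K := ∏ l ∈ Finset.range j, (1 - qq ^ (l + 1))

def poch (n : ℕ) (a : K) : PowerSeries K :=
  PowerSeries.mk fun k =>
    if n ∣ k ∧ n ≠ 0 then
      (-1 : K) ^ (k / n) * qq ^ ((k / n) * (k / n - 1) / 2) * a ^ (k / n) / qfac (k / n)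
    else 0

def zpw (f : PowerSeries K) (c : ℤ) : PowerSeries K :=
  f ^ c.toNat * Ring.inverse f ^ (-c).toNat

def Admissible (F : PowerSeries K) : Prop :=
  ∃ c : ℕ → (ℤ →₀ ℤ),
    ∀ k, PowerSeries.coeff (R := K) k F =
      PowerSeries.coeff (R := K) k
        (∏ n ∈ Finset.Icc 1 k, ∏ i ∈ (c n).support, zpw (poch n (sp i)) (c n i))

/-- `L(f) = -∑_{n,m≥1} f_n(q^{m/2})/(m(1-q^m)) · x^{nm}`:  the coefficient of `x^k` (k ≥ 1)
is `-∑_{m ∣ k} f_{k/m}(s^m)/(m(1-q^m))`. -/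
def Lser (f : ℕ → (ℤ →₀ ℤ)) : PowerSeries K :=
  PowerSeries.mk fun k =>
    if k = 0 then 0
    else
      -∑ m ∈ k.divisors,
        (∑ i ∈ (f (k / m)).support, HahnSeries.single ((m : ℤ) * i) ((f (k / m) i : ℚ))) /
          ((m : K) * (1 - qq ^ m))

/-- The exponential of a power series with zero constant term, computed degreewise. -/
def Eexp (L : PowerSeries K) : PowerSeries K :=
  PowerSeries.mk fun k =>
    PowerSeries.coeff (R := K) k
      (∑ j ∈ Finset.range (k + 1), PowerSeries.C (R := K) ((j.factorial : K))⁻¹ * L ^ j)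

open PowerSeries

section General

variable {R : Type*}

theorem trunc_pow_eq_of_trunc_eq [CommSemiring R] {A B : R⟦X⟧} {n : ℕ}
    (h : trunc n A = trunc n B) (j : ℕ) : trunc n (A ^ j) = trunc n (B ^ j) := by
  rw [← trunc_trunc_pow, h, trunc_trunc_pow]

theorem constantCoeff_rescale [CommSemiring R] (c : R) (f : R⟦X⟧) :
    constantCoeff (rescale c f) = constantCoeff f := by
  rw [← coeff_zero_eq_constantCoeff_apply, coeff_rescale, pow_zero, one_mul,
    coeff_zero_eq_constantCoeff_apply]

theorem coeff_pow_eq_zero_of_lt [CommSemiring R] {L : R⟦X⟧} (hL : constantCoeff L = 0)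
    {k j : ℕ} (h : k < j) : coeff k (L ^ j) = 0 :=
  X_pow_dvd_iff.1 (pow_dvd_pow_of_dvd (X_dvd_iff.2 hL) j) k h

theorem eq_zero_of_derivative_eq_mul [CommRing R] [IsAddTorsionFree R] {d h : R⟦X⟧}
    (hd : d⁄dX R d = h * d) (h0 : constantCoeff d = 0) : d = 0 := by
  have hdvd : ∀ n, X ^ n ∣ d := by
    intro n
    induction n with
    | zero => simp
    | succ n ih =>
      refine X_pow_dvd_iff.2 fun m hm => ?_
      rcases Nat.lt_succ_iff_lt_or_eq.1 hm with hm | rfl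
      · exact X_pow_dvd_iff.1 ih m hm
      cases m with
      | zero => simpa using h0
      | succ m =>
        have hm' : coeff m (d⁄dX R d) = 0 := by
          rw [hd]
          exact X_pow_dvd_iff.1 (dvd_mul_of_dvd_right ih h) m (lt_add_one m)
        rw [coeff_derivative, ← Nat.cast_succ, mul_comm, ← nsmul_eq_mul] at hm'
        exact (nsmul_eq_zero_iff_right (Nat.succ_ne_zero m)).1 hm'
  ext n
  exact X_pow_dvd_iff.1 (hdvd (n + 1)) n (lt_add_one n)

theorem eq_zero_of_eq_one_sub_mul_rescale [CommRing R] [NoZeroDivisors R] {q : R}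
    (hq : ∀ n, q ^ (n + 1) ≠ 1) (a : R) {d : R⟦X⟧}
    (hd : d = (1 - C a * X) * rescale q d) (h0 : constantCoeff d = 0) : d = 0 := by
  ext n
  induction n with
  | zero => simpa using h0
  | succ n ih =>
    have h := congrArg (coeff (n + 1)) hd
    rw [sub_mul, one_mul, map_sub, mul_assoc, coeff_C_mul, coeff_succ_X_mul, coeff_rescale,
      coeff_rescale, ih, map_zero, mul_zero, mul_zero, sub_zero] at h
    have h' : (1 - q ^ (n + 1)) * coeff (n + 1) d = 0 := by linear_combination h
    simpa [sub_eq_zero, (hq n).symm] using h'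

/-- `expand n` needs `n ≠ 0`, so inside a sum over `n` it is written as `subst (X ^ n)`. -/
theorem coeff_sum_subst_X_pow [CommRing R] {P : ℕ → R⟦X⟧}
    (hP : ∀ n, constantCoeff (P n) = 0) {j k : ℕ} (hjk : j ≤ k) :
    coeff j (∑ n ∈ Finset.Icc 1 k, (P n).subst (X ^ n : R⟦X⟧)) =
      ∑ n ∈ j.divisors, coeff (j / n) (P n) := by
  have hsub : j.divisors ⊆ Finset.Icc 1 k := fun n hn =>
    Finset.mem_Icc.2 ⟨Nat.pos_of_mem_divisors hn, (Nat.divisor_le hn).trans hjk⟩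
  rw [map_sum, ← Finset.sum_subset hsub fun n hn hnj => ?_]
  · refine Finset.sum_congr rfl fun n hn => ?_
    rw [← expand_apply n (Nat.pos_of_mem_divisors hn).ne', coeff_expand,
      if_pos (Nat.dvd_of_mem_divisors hn)]
  · rw [← expand_apply n (Nat.one_le_iff_ne_zero.1 (Finset.mem_Icc.1 hn).1), coeff_expand]
    split_ifs with hdvd
    · obtain rfl : j = 0 := by_contra fun hj => hnj (Nat.mem_divisors.2 ⟨hdvd, hj⟩)
      simp [hP]
    · rfl

end General

instance : CharZero K := charZero_of_injective_algebraMap (algebraMap ℚ K).injective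

def expPartial (N : ℕ) (L : K⟦X⟧) : K⟦X⟧ :=
  ∑ j ∈ Finset.range N, C ((j.factorial : K))⁻¹ * L ^ j

theorem coeff_Eexp (L : K⟦X⟧) (k : ℕ) : coeff k (Eexp L) = coeff k (expPartial (k + 1) L) :=
  coeff_mk _ _

theorem coeff_Eexp_of_lt {L : K⟦X⟧} (hL : constantCoeff L = 0) {k N : ℕ} (hk : k < N) :
    coeff k (Eexp L) = coeff k (expPartial N L) := by
  rw [coeff_Eexp]
  unfold expPartial
  rw [← Finset.sum_range_add_sum_Ico _ hk, map_add, left_eq_add, map_sum]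
  refine Finset.sum_eq_zero fun j hj => ?_
  rw [coeff_C_mul, coeff_pow_eq_zero_of_lt hL (Finset.mem_Ico.1 hj).1, mul_zero]

theorem map_expPartial (φ : K⟦X⟧ →ₐ[K] K⟦X⟧) (N : ℕ) (L : K⟦X⟧) :
    φ (expPartial N L) = expPartial N (φ L) := by
  simp only [expPartial, map_sum, map_mul, map_pow, C_eq_algebraMap, AlgHom.commutes]

theorem derivative_expPartial (L : K⟦X⟧) (N : ℕ) :
    d⁄dX K (expPartial (N + 1) L) = d⁄dX K L * expPartial N L := by
  unfold expPartial
  rw [Finset.sum_range_succ', map_add, map_sum, Finset.mul_sum]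
  simp only [pow_zero, mul_one, derivative_C, add_zero]
  refine Finset.sum_congr rfl fun j _ => ?_
  rw [← smul_eq_C_mul, Derivation.map_smul, derivative_pow, smul_eq_C_mul]
  have hfac : ((j + 1).factorial : K)⁻¹ * (j + 1 : ℕ) = (j.factorial : K)⁻¹ := by
    rw [Nat.factorial_succ, Nat.cast_mul, mul_inv, mul_comm, ← mul_assoc,
      mul_inv_cancel₀ (Nat.cast_ne_zero.2 j.succ_ne_zero), one_mul]
  rw [← hfac, map_mul, map_natCast, Nat.add_sub_cancel]
  ring

theorem derivative_Eexp {L : K⟦X⟧} (hL : constantCoeff L = 0) :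
    d⁄dX K (Eexp L) = d⁄dX K L * Eexp L := by
  ext k : 1
  rw [coeff_derivative, coeff_Eexp_of_lt hL (lt_add_one (k + 1)), ← coeff_derivative,
    derivative_expPartial, coeff_mul, coeff_mul]
  refine Finset.sum_congr rfl fun p hp => ?_
  rw [coeff_Eexp_of_lt hL (Finset.Nat.antidiagonal.snd_lt hp)]

theorem constantCoeff_Eexp (L : K⟦X⟧) : constantCoeff (Eexp L) = 1 := by
  simp [← coeff_zero_eq_constantCoeff_apply, coeff_Eexp, expPartial]

theorem Eexp_zero : Eexp 0 = 1 := by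
  ext k : 1
  rw [coeff_Eexp, expPartial, Finset.sum_eq_single 0 (fun j _ hj => by simp [hj]) (by simp)]
  simp

theorem eq_Eexp_of_derivative_eq_mul {L F : K⟦X⟧} (hL : constantCoeff L = 0)
    (hF : d⁄dX K F = d⁄dX K L * F) (hF0 : constantCoeff F = 1) : F = Eexp L := by
  refine sub_eq_zero.1 (eq_zero_of_derivative_eq_mul (h := d⁄dX K L) ?_ ?_)
  · rw [map_sub, hF, derivative_Eexp hL, mul_sub]
  · rw [map_sub, hF0, constantCoeff_Eexp, sub_self]

theorem Eexp_add {A B : K⟦X⟧} (hA : constantCoeff A = 0) (hB : constantCoeff B = 0) :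
    Eexp (A + B) = Eexp A * Eexp B := by
  refine (eq_Eexp_of_derivative_eq_mul (by rw [map_add, hA, hB, add_zero]) ?_ ?_).symm
  · rw [Derivation.leibniz, derivative_Eexp hA, derivative_Eexp hB, smul_eq_mul, smul_eq_mul,
      map_add]
    ring
  · rw [map_mul, constantCoeff_Eexp, constantCoeff_Eexp, mul_one]

theorem Eexp_mul_Eexp_neg {L : K⟦X⟧} (hL : constantCoeff L = 0) : Eexp L * Eexp (-L) = 1 := by
  rw [← Eexp_add hL (by rw [map_neg, hL, neg_zero]), add_neg_cancel, Eexp_zero]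

theorem Eexp_nsmul {L : K⟦X⟧} (hL : constantCoeff L = 0) (m : ℕ) :
    Eexp (m • L) = Eexp L ^ m := by
  induction m with
  | zero => rw [zero_smul, Eexp_zero, pow_zero]
  | succ m ih => rw [succ_nsmul, Eexp_add (by simp [hL]) hL, ih, pow_succ]

theorem zpw_Eexp {L : K⟦X⟧} (hL : constantCoeff L = 0) (c : ℤ) :
    zpw (Eexp L) c = Eexp (c • L) := by
  have hinv : Ring.inverse (Eexp L) = Eexp (-L) := Ring.inverse_unit
    ⟨Eexp L, Eexp (-L), Eexp_mul_Eexp_neg hL, (mul_comm _ _).trans (Eexp_mul_Eexp_neg hL)⟩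
  obtain ⟨n, rfl | rfl⟩ := Int.eq_nat_or_neg c
  · rw [natCast_zsmul, Eexp_nsmul hL]
    simp [zpw]
  · rw [neg_smul, natCast_zsmul, ← smul_neg, Eexp_nsmul (by simp [hL])]
    simp [zpw, hinv]

theorem Eexp_sum {ι : Type*} (s : Finset ι) {g : ι → K⟦X⟧}
    (hg : ∀ i ∈ s, constantCoeff (g i) = 0) :
    Eexp (∑ i ∈ s, g i) = ∏ i ∈ s, Eexp (g i) := by
  induction s using Finset.cons_induction with
  | empty => rw [Finset.sum_empty, Finset.prod_empty, Eexp_zero]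
  | cons a s ha ih =>
    have hs : ∀ i ∈ s, constantCoeff (g i) = 0 := fun i hi => hg i (Finset.mem_cons_of_mem hi)
    rw [Finset.sum_cons, Finset.prod_cons, Eexp_add (hg a (Finset.mem_cons_self a s))
      (by rw [map_sum]; exact Finset.sum_eq_zero hs), ih hs]

theorem Eexp_rescale (c : K) (L : K⟦X⟧) : Eexp (rescale c L) = rescale c (Eexp L) := by
  ext k : 1
  have h : rescale c (expPartial (k + 1) L) = expPartial (k + 1) (rescale c L) := by
    rw [← coe_rescaleAlgHom, RingHom.coe_coe, map_expPartial]
  rw [coeff_rescale, coeff_Eexp, coeff_Eexp, ← h, coeff_rescale]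

theorem Eexp_expand {n : ℕ} (hn : n ≠ 0) {L : K⟦X⟧} (hL : constantCoeff L = 0) :
    Eexp (expand n hn L) = expand n hn (Eexp L) := by
  ext k : 1
  rw [coeff_Eexp, ← map_expPartial, coeff_expand, coeff_expand]
  split_ifs
  · exact (coeff_Eexp_of_lt hL (Nat.lt_succ_of_le (Nat.div_le_self k n))).symm
  · rfl

theorem coeff_Eexp_congr {A B : K⟦X⟧} {k : ℕ} (h : trunc (k + 1) A = trunc (k + 1) B) :
    coeff k (Eexp A) = coeff k (Eexp B) := by
  simp only [coeff_Eexp, expPartial, map_sum, coeff_C_mul]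
  refine Finset.sum_congr rfl fun j _ => ?_
  rw [← coeff_coe_trunc_of_lt (lt_add_one k), trunc_pow_eq_of_trunc_eq h,
    coeff_coe_trunc_of_lt (lt_add_one k)]

theorem Eexp_log : Eexp (log K) = 1 + X := by
  have hgeo : d⁄dX K (log K) * (1 + X) = 1 := by
    have h := congrArg (rescale (-1 : K)) (mk_one_mul_one_sub_eq_one K)
    rw [map_mul, map_sub, map_one, rescale_X, rescale_mk] at h
    simpa [deriv_log] using h
  refine (eq_Eexp_of_derivative_eq_mul constantCoeff_log ?_ (by simp)).symm
  rw [map_add, derivative_X, Derivation.map_one_eq_zero, zero_add, hgeo]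

theorem Eexp_rescale_log (a : K) : Eexp (rescale (-a) (log K)) = 1 - C a * X := by
  rw [Eexp_rescale, Eexp_log, map_add, map_one, rescale_X, map_neg, neg_mul, sub_eq_add_neg]

theorem qq_pow_succ_ne_one (n : ℕ) : qq ^ (n + 1) ≠ 1 := fun h => by
  have h0 := congrArg (fun f : K => f.coeff 0) h
  simp [qq, sp, HahnSeries.single_pow, HahnSeries.coeff_single, HahnSeries.coeff_one] at h0
  omega

theorem one_sub_qq_pow_ne_zero {k : ℕ} (hk : k ≠ 0) : (1 : K) - qq ^ k ≠ 0 := by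
  obtain ⟨n, rfl⟩ := Nat.exists_eq_succ_of_ne_zero hk
  exact sub_ne_zero.2 (qq_pow_succ_ne_one n).symm

/-- `log (a x; q)_∞`. -/
def logPoch (a : K) : K⟦X⟧ :=
  mk fun k => if k = 0 then 0 else -a ^ k / (k * (1 - qq ^ k))

theorem constantCoeff_logPoch (a : K) : constantCoeff (logPoch a) = 0 := by
  simp [logPoch, ← coeff_zero_eq_constantCoeff_apply]

theorem logPoch_eq_rescale_log_add (a : K) :
    logPoch a = rescale (-a) (log K) + rescale qq (logPoch a) := by
  ext k : 1
  rcases eq_or_ne k 0 with rfl | hk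
  · simp only [logPoch, map_add, coeff_rescale, coeff_log, coeff_mk, if_pos, mul_zero, add_zero]
  have h1 : (k : K) ≠ 0 := Nat.cast_ne_zero.2 hk
  have h2 := one_sub_qq_pow_ne_zero hk
  simp only [logPoch, map_add, coeff_rescale, coeff_log, coeff_mk, if_neg hk, map_div₀, map_pow,
    map_neg, map_one, map_natCast]
  have hsign : ((-1 : K) ^ k) * (-1) ^ k = 1 := by rw [← mul_pow]; simp
  field_simp
  rw [neg_pow a, pow_succ]
  linear_combination (1 - qq ^ k) * a ^ k * hsign

theorem poch_one_eq_one_sub_mul_rescale (a : K) :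
    poch 1 a = (1 - C a * X) * rescale qq (poch 1 a) := by
  ext k : 1
  rw [sub_mul, one_mul, map_sub, mul_assoc, coeff_C_mul, coeff_rescale]
  cases k with
  | zero => simp [coeff_zero_X_mul]
  | succ k =>
    have hq : qfac (k + 1) = qfac k * (1 - qq ^ (k + 1)) := Finset.prod_range_succ _ k
    have hqk : qfac k ≠ 0 :=
      Finset.prod_ne_zero_iff.2 fun l _ => one_sub_qq_pow_ne_zero l.succ_ne_zero
    have h1 := one_sub_qq_pow_ne_zero k.succ_ne_zero
    simp only [coeff_succ_X_mul, coeff_rescale, poch, coeff_mk, Nat.div_one, one_dvd, ne_eq,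
      one_ne_zero, not_false_eq_true, and_self, if_true]
    rw [Nat.triangle_succ, hq]
    field_simp
    ring

theorem poch_one_eq_Eexp (a : K) : poch 1 a = Eexp (logPoch a) := by
  have hE : Eexp (logPoch a) = (1 - C a * X) * rescale qq (Eexp (logPoch a)) := by
    conv_lhs => rw [logPoch_eq_rescale_log_add]
    rw [Eexp_add (by rw [constantCoeff_rescale, constantCoeff_log])
      (by rw [constantCoeff_rescale, constantCoeff_logPoch]), Eexp_rescale_log, Eexp_rescale]
  refine sub_eq_zero.1 (eq_zero_of_eq_one_sub_mul_rescale qq_pow_succ_ne_one a ?_ ?_)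
  · rw [map_sub, mul_sub, ← poch_one_eq_one_sub_mul_rescale, ← hE]
  · rw [map_sub, constantCoeff_Eexp, poch, constantCoeff_mk]
    simp [qfac]

theorem poch_eq_expand {n : ℕ} (hn : n ≠ 0) (a : K) : poch n a = expand n hn (poch 1 a) := by
  ext k : 1
  rw [coeff_expand]
  simp only [poch, coeff_mk, Nat.div_one, one_dvd, hn, ne_eq, one_ne_zero, not_false_eq_true,
    and_true, if_true]

theorem poch_eq_Eexp {n : ℕ} (hn : n ≠ 0) (a : K) :
    poch n a = Eexp (expand n hn (logPoch a)) := by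
  rw [poch_eq_expand hn, poch_one_eq_Eexp, Eexp_expand hn (constantCoeff_logPoch a)]

/-- `log ∏ᵢ (q^{i/2} x; q)_∞ ^ g(i) = -∑_{m ≥ 1} g(q^{m/2}) x^m / (m (1 - q^m))`. -/
def logPochProd (g : ℤ →₀ ℤ) : K⟦X⟧ := ∑ i ∈ g.support, g i • logPoch (sp i)

theorem constantCoeff_logPochProd (g : ℤ →₀ ℤ) : constantCoeff (logPochProd g) = 0 := by
  simp [logPochProd, constantCoeff_logPoch]

theorem intCast_mul_sp_pow (z i : ℤ) (m : ℕ) :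
    (z : K) * sp i ^ m = HahnSeries.single ((m : ℤ) * i) (z : ℚ) := by
  rw [sp, HahnSeries.single_pow, one_pow, nsmul_eq_mul, ← map_intCast (HahnSeries.C (Γ := ℤ)),
    HahnSeries.C_apply, HahnSeries.single_mul_single, zero_add, mul_one]

theorem coeff_logPochProd (g : ℤ →₀ ℤ) {m : ℕ} (hm : m ≠ 0) :
    coeff m (logPochProd g) =
      -((∑ i ∈ g.support, HahnSeries.single ((m : ℤ) * i) (g i : ℚ)) /
        (m * (1 - qq ^ m))) := by
  rw [logPochProd, map_sum, Finset.sum_div, ← Finset.sum_neg_distrib]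
  refine Finset.sum_congr rfl fun i _ => ?_
  rw [map_zsmul, logPoch, coeff_mk, if_neg hm, zsmul_eq_mul, ← intCast_mul_sp_pow]
  ring

theorem coeff_Lser (f : ℕ → (ℤ →₀ ℤ)) (j : ℕ) :
    coeff j (Lser f) = ∑ n ∈ j.divisors, coeff (j / n) (logPochProd (f n)) := by
  rw [Lser, coeff_mk]
  split_ifs with hj
  · simp [hj]
  rw [← Nat.sum_div_divisors j (fun n => coeff (j / n) (logPochProd (f n))),
    ← Finset.sum_neg_distrib]
  refine Finset.sum_congr rfl fun m hm => ?_
  rw [Nat.div_div_self (Nat.dvd_of_mem_divisors hm) hj,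
    coeff_logPochProd _ (Nat.pos_of_mem_divisors hm).ne']

theorem prod_zpw_poch_eq_Eexp {n : ℕ} (hn : n ≠ 0) (g : ℤ →₀ ℤ) :
    ∏ i ∈ g.support, zpw (poch n (sp i)) (g i) = Eexp (expand n hn (logPochProd g)) := by
  have h0 : ∀ i, constantCoeff (expand n hn (logPoch (sp i))) = 0 := fun i => by
    rw [constantCoeff_expand, constantCoeff_logPoch]
  simp only [logPochProd, map_sum, map_zsmul]
  rw [Eexp_sum _ fun i _ => by rw [map_zsmul, h0, smul_zero]]
  exact Finset.prod_congr rfl fun i _ => by rw [poch_eq_Eexp hn, zpw_Eexp (h0 i)]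

theorem coeff_prod_zpw_poch (c : ℕ → (ℤ →₀ ℤ)) (k : ℕ) :
    coeff k (∏ n ∈ Finset.Icc 1 k, ∏ i ∈ (c n).support, zpw (poch n (sp i)) (c n i)) =
      coeff k (Eexp (Lser c)) := by
  have hpos : ∀ n ∈ Finset.Icc 1 k, n ≠ 0 := fun n hn =>
    Nat.one_le_iff_ne_zero.1 (Finset.mem_Icc.1 hn).1
  have hprod : ∏ n ∈ Finset.Icc 1 k, ∏ i ∈ (c n).support, zpw (poch n (sp i)) (c n i) =
      Eexp (∑ n ∈ Finset.Icc 1 k, (logPochProd (c n)).subst (X ^ n : K⟦X⟧)) := by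
    rw [Eexp_sum _ fun n hn => by
      rw [← expand_apply n (hpos n hn), constantCoeff_expand, constantCoeff_logPochProd]]
    exact Finset.prod_congr rfl fun n hn => by
      rw [prod_zpw_poch_eq_Eexp (hpos n hn), expand_apply]
  rw [hprod]
  refine coeff_Eexp_congr (Polynomial.ext fun j => ?_)
  rw [coeff_trunc, coeff_trunc]
  split_ifs with hj
  · rw [coeff_sum_subst_X_pow (fun n => constantCoeff_logPochProd (c n)) (Nat.lt_succ_iff.1 hj),
      coeff_Lser]
  · rfl

theorem stmt15_general (F : PowerSeries K) :
    Admissible F ↔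
      ∃ f : ℕ → (ℤ →₀ ℤ),
        ∀ k, PowerSeries.coeff (R := K) k F = PowerSeries.coeff (R := K) k (Eexp (Lser f)) :=
  ⟨fun ⟨c, hc⟩ => ⟨c, fun k => (hc k).trans (coeff_prod_zpw_poch c k)⟩,
    fun ⟨f, hf⟩ => ⟨f, fun k => (hf k).trans (coeff_prod_zpw_poch f k).symm⟩⟩

theorem stmt15 (F : PowerSeries K) (h0 : PowerSeries.coeff (R := K) 0 F = 1) :
    Admissible F ↔
      ∃ f : ℕ → (ℤ →₀ ℤ),
        ∀ k, PowerSeries.coeff (R := K) k F = PowerSeries.coeff (R := K) k (Eexp (Lser f)) :=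
  stmt15_general F

end

end Stmt15
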